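/- arXiv:1610.01443 — 10 statements merged into one kernel-verified Lean document; each statement's English description precedes it below -/
import Mathlib

section
/- For the single-sink mechanism (which picks an alternative maximizing the sum of valuations of all agents except a fixed sink agent i*), the supremum over all valuation profiles with values in (-M/2, M/2) of the welfare loss equals exactly M; i.e., the bound M is tight but not attained. -/
/-!
Splitting off the sink, the total welfare of any alternative `a` is the others' welfare plus
`v i* a`. Since the chosen alternative maximizes the others' welfare, the loss is at most
`v i* a - v i* f(v)`, a difference of two values in `(-M/2, M/2)`, hence strictly below `M`.
Conversely, if only the sink cares, valuing one alternative at `c` and the others at `-c`,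
then every alternative is a valid choice, and choosing a different one loses `2c`; so every
loss in `[0, M)` occurs.
-/

open Finset

def sinkOnlyProfile {ι A : Type*} [DecidableEq ι] [DecidableEq A] (i₀ : ι) (a₀ : A) (c : ℝ)
    (i : ι) (a : A) : ℝ :=
  if i = i₀ then (if a = a₀ then c else -c) else 0

theorem sinkOnlyProfile_mem_Ioo {ι A : Type*} [DecidableEq ι] [DecidableEq A] {M c : ℝ}
    (hc : c ∈ Set.Ico 0 (M / 2)) (i₀ : ι) (a₀ : A) (i : ι) (a : A) :
    sinkOnlyProfile i₀ a₀ c i a ∈ Set.Ioo (-(M / 2)) (M / 2) := by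
  obtain ⟨hc0, hcM⟩ := hc
  unfold sinkOnlyProfile
  split_ifs <;> constructor <;> linarith

section SumOverAgents

variable {ι A : Type*} [Fintype ι] [DecidableEq ι]

theorem sum_eq_sum_erase_add (v : ι → A → ℝ) (i₀ : ι) (a : A) :
    ∑ i, v i a = ∑ j ∈ univ.erase i₀, v j a + v i₀ a :=
  (sum_erase_add univ _ (mem_univ i₀)).symm

variable [DecidableEq A]

theorem sum_sinkOnlyProfile (i₀ : ι) (a₀ : A) (c : ℝ) (a : A) :
    ∑ i, sinkOnlyProfile i₀ a₀ c i a = if a = a₀ then c else -c := by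
  simp [sinkOnlyProfile]

theorem sum_erase_sinkOnlyProfile (i₀ : ι) (a₀ : A) (c : ℝ) (a : A) :
    ∑ j ∈ univ.erase i₀, sinkOnlyProfile i₀ a₀ c j a = 0 :=
  sum_eq_zero fun _ hj => if_neg (ne_of_mem_erase hj)

end SumOverAgents

section WelfareLoss

variable {ι A : Type*} [Fintype ι] [Fintype A] [Nonempty A]

noncomputable def welfareLoss (v : ι → A → ℝ) (a : A) : ℝ :=
  univ.sup' univ_nonempty (fun b => ∑ i, v i b) - ∑ i, v i a

variable [DecidableEq ι]

theorem exists_welfareLoss_le_sub_of_forall_sum_erase_le (v : ι → A → ℝ) (i₀ : ι) (fv : A)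
    (hmax : ∀ a, ∑ j ∈ univ.erase i₀, v j a ≤ ∑ j ∈ univ.erase i₀, v j fv) :
    ∃ a, welfareLoss v fv ≤ v i₀ a - v i₀ fv := by
  obtain ⟨a, -, ha⟩ := exists_mem_eq_sup' (univ_nonempty (α := A)) (fun b => ∑ i, v i b)
  refine ⟨a, ?_⟩
  rw [welfareLoss, ha, sum_eq_sum_erase_add v i₀ a, sum_eq_sum_erase_add v i₀ fv]
  linarith [hmax a]

theorem welfareLoss_lt_of_forall_sum_erase_le {M : ℝ} (v : ι → A → ℝ) (i₀ : ι) (fv : A)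
    (hv : ∀ i a, v i a ∈ Set.Ioo (-(M / 2)) (M / 2))
    (hmax : ∀ a, ∑ j ∈ univ.erase i₀, v j a ≤ ∑ j ∈ univ.erase i₀, v j fv) :
    welfareLoss v fv < M := by
  obtain ⟨a, ha⟩ := exists_welfareLoss_le_sub_of_forall_sum_erase_le v i₀ fv hmax
  linarith [(hv i₀ a).2, (hv i₀ fv).1]

theorem welfareLoss_sinkOnlyProfile [DecidableEq A] {c : ℝ} (hc : 0 ≤ c) (i₀ : ι) {a₀ a₁ : A}
    (h : a₁ ≠ a₀) : welfareLoss (sinkOnlyProfile i₀ a₀ c) a₁ = 2 * c := by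
  have hsup : univ.sup' univ_nonempty (fun b => ∑ i, sinkOnlyProfile i₀ a₀ c i b) = c := by
    refine le_antisymm (sup'_le _ _ fun b _ => ?_) ?_
    · rw [sum_sinkOnlyProfile]
      split_ifs <;> linarith
    · exact le_sup'_of_le _ (mem_univ a₀) (by rw [sum_sinkOnlyProfile, if_pos rfl])
  rw [welfareLoss, hsup, sum_sinkOnlyProfile, if_neg h]
  ring

end WelfareLoss

theorem stmt_1_general {n : ℕ} {A : Type} [Fintype A] [Nonempty A]
    (hA : 2 ≤ Fintype.card A) (M : ℝ) (hM : 0 < M) (istar : Fin n) :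
    IsLUB { L : ℝ | ∃ (v : Fin n → A → ℝ) (fv : A),
        (∀ i a, v i a ∈ Set.Ioo (-(M/2)) (M/2)) ∧
        (∀ a : A, ∑ j ∈ Finset.univ.erase istar, v j a ≤
            ∑ j ∈ Finset.univ.erase istar, v j fv) ∧
        L = (Finset.univ.sup' Finset.univ_nonempty (fun a => ∑ i, v i a))
              - ∑ i, v i fv } M
    ∧ M ∉ { L : ℝ | ∃ (v : Fin n → A → ℝ) (fv : A),
        (∀ i a, v i a ∈ Set.Ioo (-(M/2)) (M/2)) ∧
        (∀ a : A, ∑ j ∈ Finset.univ.erase istar, v j a ≤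
            ∑ j ∈ Finset.univ.erase istar, v j fv) ∧
        L = (Finset.univ.sup' Finset.univ_nonempty (fun a => ∑ i, v i a))
              - ∑ i, v i fv } := by
  classical
  set S := { L : ℝ | ∃ (v : Fin n → A → ℝ) (fv : A),
        (∀ i a, v i a ∈ Set.Ioo (-(M/2)) (M/2)) ∧
        (∀ a : A, ∑ j ∈ Finset.univ.erase istar, v j a ≤
            ∑ j ∈ Finset.univ.erase istar, v j fv) ∧
        L = (Finset.univ.sup' Finset.univ_nonempty (fun a => ∑ i, v i a))
              - ∑ i, v i fv }
  have hS_lt : S ⊆ Set.Iio M := by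
    rintro _ ⟨v, fv, hv, hmax, rfl⟩
    exact welfareLoss_lt_of_forall_sum_erase_le v istar fv hv hmax
  have hS_ge : Set.Ico 0 M ⊆ S := by
    obtain ⟨a₀, a₁, h⟩ := Fintype.exists_pair_of_one_lt_card hA
    rintro L ⟨hL0, hLM⟩
    refine ⟨sinkOnlyProfile istar a₀ (L / 2), a₁,
      sinkOnlyProfile_mem_Ioo ⟨by linarith, by linarith⟩ istar a₀, fun a => ?_, ?_⟩
    · rw [sum_erase_sinkOnlyProfile, sum_erase_sinkOnlyProfile]
    · rw [← welfareLoss, welfareLoss_sinkOnlyProfile (by linarith) istar h.symm]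
      ring
  exact ⟨(isLUB_Ico hM).of_subset_of_superset isLUB_Iio hS_ge hS_lt,
    fun hM_mem => lt_irrefl M (hS_lt hM_mem)⟩

/-- the supremum of the welfare loss of the single-sink mechanism
over all valuation profiles valued in `(-M/2, M/2)` is exactly `M`,
and `M` is not attained. -/
theorem stmt_1 {n : ℕ} (hn : 2 ≤ n) {A : Type} [Fintype A] [Nonempty A]
    (hA : 2 ≤ Fintype.card A) (M : ℝ) (hM : 0 < M) (istar : Fin n) :
    IsLUB { L : ℝ | ∃ (v : Fin n → A → ℝ) (fv : A),
        (∀ i a, v i a ∈ Set.Ioo (-(M/2)) (M/2)) ∧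
        (∀ a : A, ∑ j ∈ Finset.univ.erase istar, v j a ≤
            ∑ j ∈ Finset.univ.erase istar, v j fv) ∧
        L = (Finset.univ.sup' Finset.univ_nonempty (fun a => ∑ i, v i a))
              - ∑ i, v i fv } M
    ∧ M ∉ { L : ℝ | ∃ (v : Fin n → A → ℝ) (fv : A),
        (∀ i a, v i a ∈ Set.Ioo (-(M/2)) (M/2)) ∧
        (∀ a : A, ∑ j ∈ Finset.univ.erase istar, v j a ≤
            ∑ j ∈ Finset.univ.erase istar, v j fv) ∧
        L = (Finset.univ.sup' Finset.univ_nonempty (fun a => ∑ i, v i a))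
              - ∑ i, v i fv } :=
  stmt_1_general hA M hM istar
end

section
/- If a mechanism ignores the valuations of k fixed sink agents and selects an alternative maximizing the sum of valuations of the remaining n−k agents, then the worst-case welfare loss over valuation profiles in (-M/2, M/2) is at least kM − ε for every ε > 0 (so the supremum of welfare loss is at least kM). -/
/-!
Pick two alternatives `a ≠ b`. Every non-sink values `a` at a small `d > 0` and everything else at
`0`, so the mechanism must choose `a`; every sink values `b` at `M/2 - d` and everything else at
`-(M/2 - d)`. Choosing `a` instead of `b` then loses `k (M - 2d)` on the sinks and gains only
`(n - k) d` on the others, a loss of `k M - (n + k) d`, which exceeds `k M - ε` for `d` small.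
-/

open Finset

section SinkProfile

variable {ι A : Type*} [DecidableEq ι] [DecidableEq A]
  (S : Finset ι) (a b : A) (x y : ℝ)

def sinkProfile : ι → A → ℝ :=
  fun i c => if i ∈ S then (if c = b then y else -y) else (if c = a then x else 0)

lemma sum_sdiff_sinkProfile [Fintype ι] (c : A) :
    ∑ j ∈ univ \ S, sinkProfile S a b x y j c = #(univ \ S) * (if c = a then x else 0) := by
  have h : ∀ j ∈ univ \ S, sinkProfile S a b x y j c = if c = a then x else 0 :=
    fun j hj => if_neg (mem_sdiff.1 hj).2
  rw [sum_congr rfl h, sum_const, nsmul_eq_mul]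

lemma sum_sinkProfile_of_mem (c : A) :
    ∑ j ∈ S, sinkProfile S a b x y j c = #S * (if c = b then y else -y) := by
  have h : ∀ j ∈ S, sinkProfile S a b x y j c = if c = b then y else -y := fun j hj => if_pos hj
  rw [sum_congr rfl h, sum_const, nsmul_eq_mul]

lemma sum_sinkProfile [Fintype ι] (c : A) :
    ∑ i, sinkProfile S a b x y i c =
      #(univ \ S) * (if c = a then x else 0) + #S * (if c = b then y else -y) := by
  rw [← sum_sdiff (subset_univ S), sum_sdiff_sinkProfile, sum_sinkProfile_of_mem]

lemma sinkProfile_mem_Ioo {r : ℝ} (hx : 0 ≤ x) (hxr : x < r) (hy : 0 ≤ y) (hyr : y < r)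
    (i : ι) (c : A) : sinkProfile S a b x y i c ∈ Set.Ioo (-r) r := by
  unfold sinkProfile
  split_ifs <;> constructor <;> linarith

lemma eq_of_sum_sdiff_sinkProfile_le [Fintype ι] (hx : 0 < x) (hS : (univ \ S).Nonempty) {c : A}
    (hc : ∑ j ∈ univ \ S, sinkProfile S a b x y j a ≤ ∑ j ∈ univ \ S, sinkProfile S a b x y j c) :
    c = a := by
  by_contra hca
  rw [sum_sdiff_sinkProfile, sum_sdiff_sinkProfile, if_pos rfl, if_neg hca, mul_zero] at hc
  have : (0 : ℝ) < #(univ \ S) := by exact_mod_cast hS.card_pos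
  nlinarith

end SinkProfile

theorem stmt_2_general {n k : ℕ} {A : Type} [Fintype A] [Nonempty A]
    (hA : 2 ≤ Fintype.card A) (M : ℝ) (hM : 0 < M)
    (S : Finset (Fin n)) (hS : S.card = k) (hkn : k < n)
    (f : (Fin n → A → ℝ) → A)
    (hf : ∀ v : Fin n → A → ℝ, (∀ i a, v i a ∈ Set.Ioo (-(M/2)) (M/2)) →
        ∀ a : A, ∑ j ∈ Finset.univ \ S, v j a ≤ ∑ j ∈ Finset.univ \ S, v j (f v)) :
    ∀ ε > (0:ℝ), ∃ v : Fin n → A → ℝ,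
      (∀ i a, v i a ∈ Set.Ioo (-(M/2)) (M/2)) ∧
      (Finset.univ.sup' Finset.univ_nonempty (fun a => ∑ i, v i a))
        - ∑ i, v i (f v) > k * M - ε := by
  classical
  intro ε hε
  obtain ⟨a, b, hab⟩ := Fintype.exists_pair_of_one_lt_card hA
  obtain ⟨d₀, hd₀, hd₀ε⟩ := exists_pos_mul_lt hε (n + k : ℝ)
  set d := min d₀ (M / 4)
  have hd : 0 < d := lt_min hd₀ (by positivity)
  have hdε : (n + k) * d < ε :=
    (mul_le_mul_of_nonneg_left (min_le_left _ _) (by positivity)).trans_lt hd₀ε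
  have hdM : d < M / 2 := (min_le_right _ _).trans_lt (by linarith)
  set v := sinkProfile S a b d (M / 2 - d)
  have hv : ∀ i c, v i c ∈ Set.Ioo (-(M/2)) (M/2) :=
    sinkProfile_mem_Ioo S a b _ _ hd.le hdM (by linarith) (by linarith)
  have hcard : #(univ \ S) = n - k := by simp [card_sdiff_of_subset (subset_univ S), hS]
  have hfv : f v = a :=
    eq_of_sum_sdiff_sinkProfile_le S a b _ _ hd (card_pos.1 (by omega)) (hf v hv a)
  refine ⟨v, hv, ?_⟩
  calc (k * M - ε : ℝ)
      < ∑ i, v i b - ∑ i, v i a := by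
        rw [sum_sinkProfile, sum_sinkProfile, if_neg (Ne.symm hab), if_pos rfl, if_pos rfl,
          if_neg hab, hcard, hS, Nat.cast_sub hkn.le]
        linarith
    _ ≤ univ.sup' univ_nonempty (fun c => ∑ i, v i c) - ∑ i, v i (f v) := by
        rw [hfv]
        exact sub_le_sub_right (le_sup' (fun c => ∑ i, v i c) (mem_univ b)) _

/-- a mechanism with `k` fixed sink agents has worst-case welfare
loss at least `k*M - ε` for every `ε > 0`. -/
theorem stmt_2 {n k : ℕ} {A : Type} [Fintype A] [Nonempty A]
    (hA : 2 ≤ Fintype.card A) (M : ℝ) (hM : 0 < M)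
    (S : Finset (Fin n)) (hS : S.card = k) (hk1 : 1 ≤ k) (hkn : k < n)
    (f : (Fin n → A → ℝ) → A)
    (hf : ∀ v : Fin n → A → ℝ, (∀ i a, v i a ∈ Set.Ioo (-(M/2)) (M/2)) →
        ∀ a : A, ∑ j ∈ Finset.univ \ S, v j a ≤ ∑ j ∈ Finset.univ \ S, v j (f v)) :
    ∀ ε > (0:ℝ), ∃ v : Fin n → A → ℝ,
      (∀ i a, v i a ∈ Set.Ioo (-(M/2)) (M/2)) ∧
      (Finset.univ.sup' Finset.univ_nonempty (fun a => ∑ i, v i a))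
        - ∑ i, v i (f v) > k * M - ε :=
  stmt_2_general hA M hM S hS hkn f hf
end

section
/- Consider the two-alternative setting A = {a,b} and a weighted sink mechanism that ignores fixed agent i* and maximizes Σ_{j≠i*} w_j v_j(a) with positive weights w_j. If two non-sink agents j and j' have w_j > w_{j'} > 0, then the supremum of welfare loss over profiles with valuations in (-M/2, M/2) is at least M·(2 − w_{j'}/w_j), which is strictly greater than M. -/
/-!
Let `r = w j' / w j < 1`. Give the sink and `j'` the value `c ≈ M/2` for `true`, give `j` the
value `-d` with `d` slightly above `r c`, and let every `false` value be the negative of the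
`true` value. The weighted vote of the non-sink agents, `w j' c - w j d`, is then slightly
negative, so the mechanism picks `false`, although the true welfare of `true` is `2c - d > 0`.
The loss `2 (2c - d)` tends to `2 (2 - r) (M/2) = M (2 - r)`.
-/

open Finset

section OppositeProfile

variable {ι : Type*}

def oppositeProfile (u : ι → ℝ) : ι → Bool → ℝ := fun i x => if x then u i else -u i

lemma oppositeProfile_mem_Ioo {u : ι → ℝ} {R : ℝ} (hu : ∀ i, |u i| < R) (i : ι) (x : Bool) :
    oppositeProfile u i x ∈ Set.Ioo (-R) R := by
  have := abs_lt.1 (hu i)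
  cases x <;> simp only [oppositeProfile, Bool.false_eq_true, if_true, if_false, Set.mem_Ioo] <;>
    constructor <;> linarith

lemma eq_false_of_weighted_sum_neg {s : Finset ι} {w u : ι → ℝ} {b : Bool}
    (hmax : ∀ x, ∑ i ∈ s, w i * oppositeProfile u i x ≤ ∑ i ∈ s, w i * oppositeProfile u i b)
    (hneg : ∑ i ∈ s, w i * u i < 0) : b = false := by
  cases b
  · rfl
  · have := hmax false
    simp only [oppositeProfile, Bool.false_eq_true, if_true, if_false, mul_neg,
      sum_neg_distrib] at this
    linarith

lemma welfare_loss_oppositeProfile_false [Fintype ι] {u : ι → ℝ} (hu : 0 ≤ ∑ i, u i) :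
    max (∑ i, oppositeProfile u i true) (∑ i, oppositeProfile u i false)
      - ∑ i, oppositeProfile u i false = 2 * ∑ i, u i := by
  simp only [oppositeProfile, Bool.false_eq_true, if_true, if_false, sum_neg_distrib]
  rw [max_eq_left (by linarith)]
  ring

end OppositeProfile

section ThreeAgents

variable {ι : Type*} [DecidableEq ι] {a b c : ι}

lemma abs_single_add_single_add_single_lt (hab : a ≠ b) (hac : a ≠ c) (hbc : b ≠ c)
    {x y z R : ℝ} (hx : |x| < R) (hy : |y| < R) (hz : |z| < R) (i : ι) :
    |(Pi.single a x + Pi.single b y + Pi.single c z : ι → ℝ) i| < R := by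
  have hR : 0 < R := (abs_nonneg x).trans_lt hx
  by_cases hia : i = a
  · subst hia; simp [hab, hac, hx]
  by_cases hib : i = b
  · subst hib; simp [hia, hbc, hy]
  by_cases hic : i = c
  · subst hic; simp [hia, hib, hz]
  simp [hia, hib, hic, hR]

variable [Fintype ι]

lemma sum_single_add_single_add_single (x y z : ℝ) :
    ∑ i, (Pi.single a x + Pi.single b y + Pi.single c z : ι → ℝ) i = x + y + z := by
  simp [sum_add_distrib]

lemma weighted_sum_erase_single_add_single_add_single (w : ι → ℝ) (hb : b ≠ a) (hc : c ≠ a)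
    (x y z : ℝ) :
    ∑ i ∈ univ.erase a, w i * (Pi.single a x + Pi.single b y + Pi.single c z : ι → ℝ) i
      = w b * y + w c * z := by
  simp [Pi.single_apply, mul_add, sum_add_distrib, hb, hc]

end ThreeAgents

theorem stmt_3_general {n : ℕ} (M : ℝ) (hM : 0 < M)
    (istar : Fin n) (w : Fin n → ℝ) (hw : ∀ i, i ≠ istar → 0 < w i)
    (j j' : Fin n) (hj : j ≠ istar) (hj' : j' ≠ istar) (hjj' : j ≠ j')
    (hwjj' : w j' < w j)
    (f : (Fin n → Bool → ℝ) → Bool)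
    (hf : ∀ v : Fin n → Bool → ℝ, (∀ i x, v i x ∈ Set.Ioo (-(M/2)) (M/2)) →
        ∀ x : Bool, ∑ i ∈ Finset.univ.erase istar, w i * v i x ≤
          ∑ i ∈ Finset.univ.erase istar, w i * v i (f v)) :
    (∀ ε > (0:ℝ), ∃ v : Fin n → Bool → ℝ,
        (∀ i x, v i x ∈ Set.Ioo (-(M/2)) (M/2)) ∧
        max (∑ i, v i true) (∑ i, v i false) - ∑ i, v i (f v)
          > M * (2 - w j' / w j) - ε)
    ∧ M < M * (2 - w j' / w j) := by
  have hwj : 0 < w j := hw j hj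
  have hr1 : w j' / w j < 1 := (div_lt_one hwj).2 hwjj'
  have hr0 : 0 < w j' / w j := div_pos (hw j' hj') hwj
  refine ⟨fun ε hε => ?_, by nlinarith⟩
  set r := w j' / w j with hr
  obtain ⟨η, hη0, hηε, hηM⟩ : ∃ η : ℝ, 0 < η ∧ η ≤ ε / 7 ∧ η ≤ M / 4 :=
    ⟨min (ε / 7) (M / 4), by positivity, min_le_left _ _, min_le_right _ _⟩
  set c := M / 2 - η with hc
  set d := r * c + η with hd
  set u : Fin n → ℝ := Pi.single istar c + Pi.single j (-d) + Pi.single j' c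
  have hbox : ∀ i, |u i| < M / 2 := by
    have hc_lt : |c| < M / 2 := abs_lt.2 ⟨by linarith, by linarith⟩
    have hd_lt : |-d| < M / 2 := abs_lt.2 ⟨by nlinarith, by nlinarith⟩
    exact abs_single_add_single_add_single_lt hj.symm hj'.symm hjj' hc_lt hd_lt hc_lt
  have hvote : ∑ i ∈ univ.erase istar, w i * u i = -(w j * η) := by
    rw [weighted_sum_erase_single_add_single_add_single w hj hj', hd, hr]
    field_simp
    ring
  have hpick : f (oppositeProfile u) = false :=
    eq_false_of_weighted_sum_neg (hf _ (oppositeProfile_mem_Ioo hbox))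
      (by rw [hvote]; nlinarith)
  refine ⟨oppositeProfile u, oppositeProfile_mem_Ioo hbox, ?_⟩
  have hwelfare : ∑ i, u i = 2 * c - d := by
    rw [sum_single_add_single_add_single]; ring
  rw [hpick, welfare_loss_oppositeProfile_false (by rw [hwelfare]; nlinarith), hwelfare]
  nlinarith

/-- a weighted sink mechanism with unequal positive weights
`w j > w j'` has worst-case welfare loss at least `M * (2 - w j' / w j) > M`. -/
theorem stmt_3 {n : ℕ} (hn : 3 ≤ n) (M : ℝ) (hM : 0 < M)
    (istar : Fin n) (w : Fin n → ℝ) (hw : ∀ i, i ≠ istar → 0 < w i)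
    (j j' : Fin n) (hj : j ≠ istar) (hj' : j' ≠ istar) (hjj' : j ≠ j')
    (hwjj' : w j' < w j)
    (f : (Fin n → Bool → ℝ) → Bool)
    (hf : ∀ v : Fin n → Bool → ℝ, (∀ i x, v i x ∈ Set.Ioo (-(M/2)) (M/2)) →
        ∀ x : Bool, ∑ i ∈ Finset.univ.erase istar, w i * v i x ≤
          ∑ i ∈ Finset.univ.erase istar, w i * v i (f v)) :
    (∀ ε > (0:ℝ), ∃ v : Fin n → Bool → ℝ,
        (∀ i x, v i x ∈ Set.Ioo (-(M/2)) (M/2)) ∧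
        max (∑ i, v i true) (∑ i, v i false) - ∑ i, v i (f v)
          > M * (2 - w j' / w j) - ε)
    ∧ M < M * (2 - w j' / w j) :=
  stmt_3_general M hM istar w hw j j' hj hj' hjj' hwjj' f hf
end

section
/- In the naïve randomized sink mechanism with two alternatives, for any valuation profile, the number of agents i such that removing agent i changes the efficient alternative away from the overall efficient alternative AND agent i's valuation gap between the two alternatives exceeds M − δ (for all δ up to some threshold), is at most ⌈n/2⌉. More precisely: at most ⌈n/2⌉ agents can simultaneously be pivotal with valuation gap arbitrarily close to M. -/
/-!
Write `d j = v j true - v j false` for the valuation gap of agent `j`, so `-M < d j < M`.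
If some agent `i` is pivotal for `a`, the others have negative total gap, so the total
gap is less than `d i < M`. On the other hand, `k` agents with gap above `M - ε` and `n - k`
agents with gap above `-M` give a total gap of at least `(2k - n) M - k ε`, which is at
least `M` as soon as `2k ≥ n + 2` and `k ε ≤ M`.
-/

open Finset Classical

section

variable {ι : Type*} [Fintype ι]

lemma card_mul_sub_le_sum {d : ι → ℝ} {M ε : ℝ} (S : Finset ι)
    (hlow : ∀ j, -M ≤ d j) (hS : ∀ j ∈ S, M - ε ≤ d j) :
    (S.card : ℝ) * (M - ε) - ((Fintype.card ι : ℝ) - S.card) * M ≤ ∑ j, d j := by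
  have hS_sum : (S.card : ℝ) * (M - ε) ≤ ∑ j ∈ S, d j := by
    simpa using card_nsmul_le_sum S d (M - ε) hS
  have hSc_sum : (Sᶜ.card : ℝ) * -M ≤ ∑ j ∈ Sᶜ, d j := by
    simpa using card_nsmul_le_sum Sᶜ d (-M) fun j _ => hlow j
  have hcard : (Fintype.card ι : ℝ) - S.card = Sᶜ.card := by
    rw [sub_eq_iff_eq_add', ← Nat.cast_add, card_add_card_compl]
  rw [hcard, ← sum_add_sum_compl S d]
  linarith

lemma two_mul_card_le_of_sum_lt {d : ι → ℝ} {M ε : ℝ} (hM : 0 ≤ M) (S : Finset ι)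
    (hlow : ∀ j, -M ≤ d j) (hS : ∀ j ∈ S, M - ε ≤ d j) (hsum : ∑ j, d j < M)
    (hε : (S.card : ℝ) * ε ≤ M) : 2 * S.card ≤ Fintype.card ι + 1 := by
  by_contra! hlarge
  have hlarge' : (Fintype.card ι : ℝ) + 2 ≤ 2 * S.card := by exact_mod_cast hlarge
  nlinarith [card_mul_sub_le_sum S hlow hS, mul_le_mul_of_nonneg_right hlarge' hM]

end

/-- for sufficiently small `ε`, at most `⌈n/2⌉` agents can be
pivotal for the efficient alternative with valuation gap exceeding `M - ε`. -/
theorem stmt_4 (n : ℕ) (M : ℝ) (hM : 0 < M) :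
    ∃ ε₀ > (0:ℝ), ∀ ε : ℝ, 0 < ε → ε < ε₀ →
      ∀ v : Fin n → Bool → ℝ,
        (∀ i x, v i x ∈ Set.Ioo (-(M/2)) (M/2)) →
        (∑ j, v j false ≤ ∑ j, v j true) →
        (Finset.univ.filter (fun i =>
            (∑ j ∈ Finset.univ.erase i, v j true < ∑ j ∈ Finset.univ.erase i, v j false)
            ∧ M - ε < v i true - v i false)).card ≤ (n + 1) / 2 := by
  refine ⟨M / (n + 1), by positivity, fun ε hε hεM v hv _ => ?_⟩
  set S := univ.filter fun i : Fin n =>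
    (∑ j ∈ univ.erase i, v j true < ∑ j ∈ univ.erase i, v j false)
      ∧ M - ε < v i true - v i false
  let d : Fin n → ℝ := fun j => v j true - v j false
  have hgap : ∀ j, -M < d j ∧ d j < M := fun j => by
    obtain ⟨htrue_low, htrue_high⟩ := hv j true
    obtain ⟨hfalse_low, hfalse_high⟩ := hv j false
    constructor <;> linarith
  rcases S.eq_empty_or_nonempty with hempty | ⟨i, hi⟩
  · simp [hempty]
  have hpivotal : ∑ j ∈ univ.erase i, d j < 0 := by
    simpa [d, sum_sub_distrib] using (mem_filter.mp hi).2.1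
  have hsum : ∑ j, d j < M := by
    rw [← add_sum_erase _ _ (mem_univ i)]; linarith [hgap i]
  have hε' : (S.card : ℝ) * ε ≤ M := by
    have hcard : (S.card : ℝ) ≤ n := by
      exact_mod_cast (card_le_univ S).trans_eq (Fintype.card_fin n)
    have : ε * (n + 1) < M := (lt_div_iff₀ (by positivity)).mp hεM
    nlinarith
  have hbound := two_mul_card_le_of_sum_lt hM.le S (fun j => (hgap j).1.le)
    (fun j hj => (mem_filter.mp hj).2.2.le) hsum hε'
  rw [Fintype.card_fin] at hbound
  omega
end

section
/- For a fixed sink-selection probability vector (q_1, q_2) with q_1 + q_2 = 1 in the two-agent two-alternative sink setting with valuations in (-1/2, 1/2), the worst-case inefficiency equals max(q_1, q_2) (in the supremum sense), and this is minimized at q_1 = q_2 = 1/2, giving value 1/2. -/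
/-- The alternative preferred by an agent with valuation `u` over `Bool`
(`false` plays the role of `a`; ties are broken in favor of `a`). -/
noncomputable def pref (u : Bool → ℝ) : Bool := if u false < u true then true else false

/-- for a fixed sink-selection distribution `(q₁, q₂)`, the
worst-case inefficiency equals `max q₁ q₂`, which is at least—and exactly at
`q₁ = q₂ = 1/2` equal to—`1/2`. -/
theorem stmt_10 (q₁ q₂ : ℝ) (hq₁ : 0 ≤ q₁) (hq₂ : 0 ≤ q₂) (hsum : q₁ + q₂ = 1) :
    IsLUB { x : ℝ | ∃ v₁ v₂ : Bool → ℝ,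
        (∀ y, v₁ y ∈ Set.Ioo (-(1/2) : ℝ) (1/2)) ∧
        (∀ y, v₂ y ∈ Set.Ioo (-(1/2) : ℝ) (1/2)) ∧
        x = q₁ * (max (v₁ true + v₂ true) (v₁ false + v₂ false)
              - (v₁ (pref v₂) + v₂ (pref v₂)))
          + q₂ * (max (v₁ true + v₂ true) (v₁ false + v₂ false)
              - (v₁ (pref v₁) + v₂ (pref v₁))) }
      (max q₁ q₂)
    ∧ 1/2 ≤ max q₁ q₂
    ∧ (q₁ = 1/2 → q₂ = 1/2 → max q₁ q₂ = 1/2) := by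
  refine ⟨⟨?_, ?_⟩, ?_, ?_⟩
  · -- upper bound
    rintro x ⟨v₁, v₂, hb₁, hb₂, rfl⟩
    obtain ⟨h1tl, h1tu⟩ := hb₁ true
    obtain ⟨h1fl, h1fu⟩ := hb₁ false
    obtain ⟨h2tl, h2tu⟩ := hb₂ true
    obtain ⟨h2fl, h2fu⟩ := hb₂ false
    by_cases h1 : v₁ false < v₁ true <;> by_cases h2 : v₂ false < v₂ true <;>
      simp only [pref, if_pos, if_neg, h1, h2, if_true, if_false] <;>
      rcases le_total (v₁ true + v₂ true) (v₁ false + v₂ false) with hm | hm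
    · exact absurd (by linarith) (not_lt.mpr hm)
    · rw [max_eq_left hm]
      have : (0:ℝ) ≤ max q₁ q₂ := le_trans hq₁ (le_max_left _ _)
      linarith
    · rw [max_eq_right hm]
      refine le_trans ?_ (le_max_right q₁ q₂)
      have : q₂ * ((v₁ false + v₂ false) - (v₁ true + v₂ true)) ≤ q₂ * 1 :=
        mul_le_mul_of_nonneg_left (by linarith) hq₂
      linarith
    · rw [max_eq_left hm]
      refine le_trans ?_ (le_max_left q₁ q₂)
      have : q₁ * ((v₁ true + v₂ true) - (v₁ false + v₂ false)) ≤ q₁ * 1 :=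
        mul_le_mul_of_nonneg_left (by linarith) hq₁
      linarith
    · rw [max_eq_right hm]
      refine le_trans ?_ (le_max_left q₁ q₂)
      have : q₁ * ((v₁ false + v₂ false) - (v₁ true + v₂ true)) ≤ q₁ * 1 :=
        mul_le_mul_of_nonneg_left (by linarith) hq₁
      linarith
    · rw [max_eq_left hm]
      refine le_trans ?_ (le_max_right q₁ q₂)
      have : q₂ * ((v₁ true + v₂ true) - (v₁ false + v₂ false)) ≤ q₂ * 1 :=
        mul_le_mul_of_nonneg_left (by linarith) hq₂
      linarith
    · rw [max_eq_right hm]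
      have : (0:ℝ) ≤ max q₁ q₂ := le_trans hq₁ (le_max_left _ _)
      linarith
    · have hAB : v₁ true + v₂ true = v₁ false + v₂ false := le_antisymm (by linarith) hm
      rw [max_eq_left hm, hAB]
      have : (0:ℝ) ≤ max q₁ q₂ := le_trans hq₁ (le_max_left _ _)
      nlinarith
  · -- least upper bound
    rintro b hb
    have key : ∀ (qa : ℝ), qa ≤ 1 →
        (∀ e : ℝ, 0 < e → e ≤ 1 →
          qa * (1 - e/2) ∈ { x : ℝ | ∃ v₁ v₂ : Bool → ℝ,
            (∀ y, v₁ y ∈ Set.Ioo (-(1/2) : ℝ) (1/2)) ∧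
            (∀ y, v₂ y ∈ Set.Ioo (-(1/2) : ℝ) (1/2)) ∧
            qa * (1 - e/2) = q₁ * (max (v₁ true + v₂ true) (v₁ false + v₂ false)
                  - (v₁ (pref v₂) + v₂ (pref v₂)))
              + q₂ * (max (v₁ true + v₂ true) (v₁ false + v₂ false)
                  - (v₁ (pref v₁) + v₂ (pref v₁))) }) → qa ≤ b := by
      intro qa hqa1 hmem
      refine le_of_forall_pos_le_add ?_
      intro ε hε
      set e : ℝ := min ε 1 with he
      have he0 : 0 < e := lt_min hε one_pos
      have he1 : e ≤ 1 := min_le_right _ _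
      have heε : e ≤ ε := min_le_left _ _
      have hx := hb (hmem e he0 he1)
      nlinarith
    apply max_le
    · refine key q₁ (by linarith) ?_
      intro e he0 he1
      refine ⟨fun y => if y then 1/2 - e/4 else -(1/2 - e/4), fun _ => 0, ?_, ?_, ?_⟩
      · intro y; cases y <;> constructor <;> simp <;> nlinarith
      · intro y; constructor <;> norm_num
      · have hp2 : pref (fun _ : Bool => (0:ℝ)) = false := by simp [pref]
        have hp1 : pref (fun y : Bool => if y then 1/2 - e/4 else -(1/2 - e/4)) = true := by
          simp only [pref]; norm_num; nlinarith
        rw [hp1, hp2]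
        norm_num
        rw [max_eq_left (by nlinarith)]
        ring
    · refine key q₂ (by linarith) ?_
      intro e he0 he1
      refine ⟨fun _ => 0, fun y => if y then 1/2 - e/4 else -(1/2 - e/4), ?_, ?_, ?_⟩
      · intro y; constructor <;> norm_num
      · intro y; cases y <;> constructor <;> simp <;> nlinarith
      · have hp1 : pref (fun _ : Bool => (0:ℝ)) = false := by simp [pref]
        have hp2 : pref (fun y : Bool => if y then 1/2 - e/4 else -(1/2 - e/4)) = true := by
          simp only [pref]; norm_num; nlinarith
        rw [hp1, hp2]
        norm_num
        rw [max_eq_left (by nlinarith)]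
        ring
  · rcases le_total q₁ q₂ with h | h
    · rw [max_eq_right h]; linarith
    · rw [max_eq_left h]; linarith
  · intro h1 h2; rw [h1, h2]; simp
end

section
/- Suppose n = 2 and the allocation is the weighted maximizer f(v) ∈ argmax_{x∈{a₁,a₂}} (w₁v₁(x) + w₂v₂(x)) with w₁, w₂ > 0, and payments have the form p_i(v) = h_i(v_{-i}) − (1/w_i)Σ_{j≠i} w_j v_j(f(v)). Then there is no choice of functions h₁, h₂ making the mechanism budget balanced (p₁(v) + p₂(v) = 0 for all v) over valuations drawn from the open interval (-M/2, M/2). -/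
/-!
Budget balance says that `(w₂/w₁)·v₂(f v) + (w₁/w₂)·v₁(f v)` equals `h₁ v₂ + h₂ v₁`, a sum of a
function of `v₁` and a function of `v₂`; such a sum has vanishing cross difference on every
rectangle `{a, b} × {c, d}` of profiles. Take `a, b` to value only `true`, resp. only `false`, at
`t`, and `c, d` to value `true` at `s`, resp. `0`, everything else at `0`. If `w₂ s < w₁ t`, agent 1
alone decides the outcome, and the cross difference is `(w₂/w₁)·s ≠ 0`.
-/

open Set

theorem Bool.eq_of_forall_le_of_lt_not {α : Type*} [Preorder α] {u : Bool → α} {x y : Bool}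
    (hx : ∀ z, u z ≤ u x) (hy : u (!y) < u y) : x = y := by
  by_contra hne
  rw [Bool.eq_not.mpr hne] at hx
  exact (hx y).not_gt hy

theorem Pi.single_apply_mem {ι α : Type*} [DecidableEq ι] [Zero α] {S : Set α} {r : α}
    (h0 : 0 ∈ S) (hr : r ∈ S) (i x : ι) : (Pi.single i r : ι → α) x ∈ S := by
  rw [Pi.single_apply]
  split_ifs <;> assumption

theorem cross_diff_eq_zero_of_eq_add {α β γ : Type*} [AddCommGroup γ] {P : α → Prop}
    {Q : β → Prop} {g : α → β → γ} {h₁ : β → γ} {h₂ : α → γ}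
    (hg : ∀ x y, P x → Q y → g x y = h₁ y + h₂ x) {a b : α} {c d : β}
    (ha : P a) (hb : P b) (hc : Q c) (hd : Q d) :
    g a c + g b d = g a d + g b c := by
  rw [hg a c ha hc, hg b d hb hd, hg a d ha hd, hg b c hb hc]
  abel

theorem exists_pos_lt_and_mul_lt_mul {w₁ w₂ t : ℝ} (hw₁ : 0 < w₁) (hw₂ : 0 < w₂) (ht : 0 < t) :
    ∃ s, 0 < s ∧ s < t ∧ w₂ * s < w₁ * t := by
  refine ⟨w₁ * t / (w₁ + w₂), by positivity, ?_, ?_⟩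
  · rw [div_lt_iff₀ (by positivity)]
    nlinarith [mul_pos hw₂ ht]
  · rw [mul_div_assoc', div_lt_iff₀ (by positivity)]
    nlinarith [mul_pos (mul_pos hw₁ hw₂) ht]

/-- for two agents, a weighted-maximizer allocation with positive
weights and Groves-form payments admits no choice of `h₁, h₂` achieving budget
balance on valuations from `(-M/2, M/2)`. -/
theorem stmt_11 (M : ℝ) (hM : 0 < M) (w₁ w₂ : ℝ) (hw₁ : 0 < w₁) (hw₂ : 0 < w₂)
    (f : (Bool → ℝ) → (Bool → ℝ) → Bool)
    (hf : ∀ v₁ v₂ : Bool → ℝ,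
      (∀ x, v₁ x ∈ Set.Ioo (-(M/2)) (M/2)) →
      (∀ x, v₂ x ∈ Set.Ioo (-(M/2)) (M/2)) →
      ∀ x : Bool, w₁ * v₁ x + w₂ * v₂ x ≤ w₁ * v₁ (f v₁ v₂) + w₂ * v₂ (f v₁ v₂)) :
    ¬ ∃ h₁ h₂ : (Bool → ℝ) → ℝ,
      ∀ v₁ v₂ : Bool → ℝ,
        (∀ x, v₁ x ∈ Set.Ioo (-(M/2)) (M/2)) →
        (∀ x, v₂ x ∈ Set.Ioo (-(M/2)) (M/2)) →
        (h₁ v₂ - (1 / w₁) * (w₂ * v₂ (f v₁ v₂)))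
          + (h₂ v₁ - (1 / w₂) * (w₁ * v₁ (f v₁ v₂))) = 0 := by
  rintro ⟨h₁, h₂, hbb⟩
  obtain ⟨s, hs, hst, hws⟩ := exists_pos_lt_and_mul_lt_mul hw₁ hw₂ (by positivity : 0 < M / 4)
  have hdom (i : Bool) (r : ℝ) (hr : 0 ≤ r) (hrM : r < M / 2) :
      ∀ x, (Pi.single i r : Bool → ℝ) x ∈ Ioo (-(M/2)) (M/2) :=
    Pi.single_apply_mem (S := Ioo (-(M/2)) (M/2)) ⟨by linarith, by linarith⟩ ⟨by linarith, hrM⟩ i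
  set a : Bool → ℝ := Pi.single true (M / 4)
  set b : Bool → ℝ := Pi.single false (M / 4)
  set c : Bool → ℝ := Pi.single true s
  have ha := hdom true (M / 4) (by positivity) (by linarith)
  have hb := hdom false (M / 4) (by positivity) (by linarith)
  have hc := hdom true s hs.le (by linarith)
  have hd : ∀ x, (0 : Bool → ℝ) x ∈ Ioo (-(M/2)) (M/2) := fun _ => by simp [hM]
  have hac : f a c = true :=
    Bool.eq_of_forall_le_of_lt_not (hf a c ha hc) (by simp [a, c]; positivity)
  have had : f a 0 = true :=
    Bool.eq_of_forall_le_of_lt_not (hf a 0 ha hd) (by simp [a]; positivity)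
  have hbc : f b c = false :=
    Bool.eq_of_forall_le_of_lt_not (hf b c hb hc) (by simpa [b, c] using hws)
  have hbd : f b 0 = false :=
    Bool.eq_of_forall_le_of_lt_not (hf b 0 hb hd) (by simp [b]; positivity)
  have hcross := cross_diff_eq_zero_of_eq_add (h₁ := h₁) (h₂ := h₂)
    (g := fun v₁ v₂ => (1 / w₁) * (w₂ * v₂ (f v₁ v₂)) + (1 / w₂) * (w₁ * v₁ (f v₁ v₂)))
    (fun v₁ v₂ hv₁ hv₂ => by linear_combination -hbb v₁ v₂ hv₁ hv₂) ha hb hc hd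
  simp only [hac, had, hbc, hbd, a, b, c, Pi.single_eq_same,
    Pi.single_eq_of_ne Bool.false_ne_true, Pi.zero_apply] at hcross
  have : 0 < 1 / w₁ * (w₂ * s) := by positivity
  linarith
end

section
/- Let w₁ ≥ w₂ ≥ … ≥ w_n > 0 and δ > 0. There exist reals v₁,…,v_n in a sufficiently large open interval such that −δ·Σ_{i=1}^{n−1} w_i < Σ_{i=1}^n w_i v_i < −δ·Σ_{i=1}^{n−2} w_i; moreover at the profile where agents 1,…,n−1 report v_i + δ and agent n reports v_n, the weighted sum Σ w_i of the shifted profile is positive, but decreasing any single agent i ∈ {1,…,n−1} back to v_i makes it negative. -/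
open Finset

theorem Fin.sum_filter_val_lt_succ {M : Type*} [AddCommMonoid M] {n m : ℕ} (hm : m < n)
    (f : Fin n → M) :
    ∑ i ∈ univ.filter (fun i : Fin n => (i : ℕ) < m + 1), f i
      = f ⟨m, hm⟩ + ∑ i ∈ univ.filter (fun i : Fin n => (i : ℕ) < m), f i := by
  have hsplit : univ.filter (fun i : Fin n => (i : ℕ) < m + 1)
      = insert ⟨m, hm⟩ (univ.filter (fun i : Fin n => (i : ℕ) < m)) := by
    ext i
    simp only [mem_filter, mem_univ, true_and, mem_insert, Fin.ext_iff]
    omega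
  rw [hsplit, sum_insert (by simp)]

theorem exists_sum_mul_eq {ι K : Type*} [Fintype ι] [DecidableEq ι] [Field K] {w : ι → K}
    {j : ι} (hj : w j ≠ 0) (t : K) : ∃ v : ι → K, ∑ i, w i * v i = t :=
  ⟨Pi.single j (t / w j), by simp [Pi.single_apply, mul_div_cancel₀ t hj]⟩

/-- for decreasing positive weights and `δ > 0` there exist values
`v` with `-δ·Σ_{i=1}^{n-1} w_i < Σ w_i v_i < -δ·Σ_{i=1}^{n-2} w_i`; moreover
these inequalities force the shifted profile `v^{{n}}` to have positive weighted
sum while lowering any single agent `i < n-1` back makes it negative. -/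
theorem stmt_12 {n : ℕ} (hn : 2 ≤ n) (w : Fin n → ℝ)
    (hpos : ∀ i, 0 < w i) (hmono : ∀ i j : Fin n, i ≤ j → w j ≤ w i)
    (δ : ℝ) (hδ : 0 < δ) :
    ∃ v : Fin n → ℝ,
      (-δ * ∑ i ∈ Finset.univ.filter (fun i : Fin n => (i : ℕ) < n - 1), w i
          < ∑ i, w i * v i) ∧
      (∑ i, w i * v i
          < -δ * ∑ i ∈ Finset.univ.filter (fun i : Fin n => (i : ℕ) < n - 2), w i) ∧
      (0 < ∑ i, w i * v i
          + δ * ∑ i ∈ Finset.univ.filter (fun i : Fin n => (i : ℕ) < n - 1), w i) ∧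
      (∀ k : Fin n, (k : ℕ) < n - 1 →
        ∑ i, w i * v i
          + δ * ((∑ i ∈ Finset.univ.filter (fun i : Fin n => (i : ℕ) < n - 1), w i) - w k)
          < 0) := by
  have hj : n - 2 < n := by omega
  set j : Fin n := ⟨n - 2, hj⟩
  have hsplit := Fin.sum_filter_val_lt_succ hj w
  rw [show n - 2 + 1 = n - 1 by omega] at hsplit
  set A := ∑ i ∈ univ.filter (fun i : Fin n => (i : ℕ) < n - 1), w i
  have hδj : 0 < δ * w j := mul_pos hδ (hpos j)
  -- The four conditions only involve `t = ∑ i, w i * v i`; by `hsplit` and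
  -- `w j ≤ w k` they all hold for `t` the midpoint of `(-δ * A, -δ * A + δ * w j)`.
  obtain ⟨v, hv⟩ := exists_sum_mul_eq (hpos j).ne' (-δ * A + δ * w j / 2)
  refine ⟨v, ?_, ?_, ?_, fun k hk => ?_⟩ <;> rw [hv]
  · linarith
  · rw [hsplit]; linarith
  · linarith
  · have hkj : δ * w j ≤ δ * w k :=
      mul_le_mul_of_nonneg_left (hmono k j (Fin.mk_le_mk.mpr (by omega))) hδ.le
    linarith
end

section
/- In the two-agent two-alternative setting, if a generalized sink mechanism's sink-selection probabilities differ between two opposing-preference profiles v and v', then along the path v = (v₁,v₂) → (v₁',v₂) → (v₁',v₂') = v' the probabilities must change at one of the two single-agent transitions, and at that transition the agent whose alternative-selection probability increases by misreporting strictly gains expected utility; hence the mechanism is not strategyproof. -/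
/-- if a two-agent two-alternative generalized sink mechanism's
sink probabilities differ between two opposing-preference profiles (agent 1
strictly prefers `a = false`, agent 2 strictly prefers `b = true`), then the
mechanism is not strategyproof. -/
theorem stmt_14 (g : (Bool → ℝ) → (Bool → ℝ) → ℝ)
    (hg : ∀ v₁ v₂, 0 ≤ g v₁ v₂ ∧ g v₁ v₂ ≤ 1)
    (hne : ∃ v₁ v₂ v₁' v₂' : Bool → ℝ,
      (∀ x, v₁ x ∈ Set.Ioo (-(1/2) : ℝ) (1/2)) ∧
      (∀ x, v₂ x ∈ Set.Ioo (-(1/2) : ℝ) (1/2)) ∧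
      (∀ x, v₁' x ∈ Set.Ioo (-(1/2) : ℝ) (1/2)) ∧
      (∀ x, v₂' x ∈ Set.Ioo (-(1/2) : ℝ) (1/2)) ∧
      v₁ true < v₁ false ∧ v₂ false < v₂ true ∧
      v₁' true < v₁' false ∧ v₂' false < v₂' true ∧
      g v₁ v₂ ≠ g v₁' v₂') :
    ¬ ((∀ v₁ v₁' v₂ : Bool → ℝ,
        (∀ x, v₁ x ∈ Set.Ioo (-(1/2) : ℝ) (1/2)) →
        (∀ x, v₁' x ∈ Set.Ioo (-(1/2) : ℝ) (1/2)) →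
        (∀ x, v₂ x ∈ Set.Ioo (-(1/2) : ℝ) (1/2)) →
        g v₁' v₂ * v₁ (pref v₂) + (1 - g v₁' v₂) * v₁ (pref v₁')
          ≤ g v₁ v₂ * v₁ (pref v₂) + (1 - g v₁ v₂) * v₁ (pref v₁))
      ∧ (∀ v₁ v₂ v₂' : Bool → ℝ,
        (∀ x, v₁ x ∈ Set.Ioo (-(1/2) : ℝ) (1/2)) →
        (∀ x, v₂ x ∈ Set.Ioo (-(1/2) : ℝ) (1/2)) →
        (∀ x, v₂' x ∈ Set.Ioo (-(1/2) : ℝ) (1/2)) →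
        g v₁ v₂' * v₂ (pref v₂') + (1 - g v₁ v₂') * v₂ (pref v₁)
          ≤ g v₁ v₂ * v₂ (pref v₂) + (1 - g v₁ v₂) * v₂ (pref v₁))) := by
  rintro ⟨h1, h2⟩
  obtain ⟨v₁, v₂, v₁', v₂', b1, b2, b3, b4, p1, p2, p3, p4, hne⟩ := hne
  have pv₁ : pref v₁ = false := by simp [pref, not_lt.mpr p1.le]
  have pv₁' : pref v₁' = false := by simp [pref, not_lt.mpr p3.le]
  have pv₂ : pref v₂ = true := by simp [pref, p2]
  have pv₂' : pref v₂' = true := by simp [pref, p4]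
  have A := h1 v₁ v₁' v₂ b1 b3 b2
  have B := h1 v₁' v₁ v₂ b3 b1 b2
  have C := h2 v₁' v₂ v₂' b3 b2 b4
  have D := h2 v₁' v₂' v₂ b3 b4 b2
  rw [pv₁, pv₁', pv₂] at A B
  rw [pv₁', pv₂, pv₂'] at C D
  have e1 : g v₁ v₂ = g v₁' v₂ := by nlinarith [A, B, p1]
  have e2 : g v₁' v₂ = g v₁' v₂' := by nlinarith [C, D, p2, p4]
  exact hne (e1.trans e2)
end

section
/- In the two-agent case of the unimprovability argument: suppose w₁, w₂ > 0 and there exist functions h₁, h₂ : ℝ → ℝ such that for all valuation pairs (v₁, v₂) of reals with w₁v₁ + w₂v₂ > 0 the quantity |h₁(v₂) + h₂(v₁) − (w₂/w₁)v₂ − (w₁/w₂)v₁| < ε, and for all pairs with w₁v₁ + w₂v₂ < 0 we have |h₁(v₂) + h₂(v₁)| < ε. Then we derive a contradiction: no such h₁, h₂ exist for valuations ranging over all of ℝ. -/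
/-!
Write `g v₁ v₂ = h₁ v₂ + h₂ v₁`. Any such sum of a function of `v₂` and a function of `v₁` has
vanishing rectangle defect: `g 0 t + g x (-t) = g 0 (-t) + g x t`. For `t > 0` and `x` large, the
corners `(0, t)`, `(x, ± t)` lie in the region where the project is built and `(0, -t)` in the one
where it is not, so near-budget-balance forces `g` within `ε` of `(w₂/w₁) v₂ + (w₁/w₂) v₁` at the
first three and of `0` at the last; the rectangle defect of these targets is `(w₂/w₁) t`. Hence
`(w₂/w₁) t < 4ε` for every `t > 0`, which fails for unbounded valuations.
-/

def IsNearBudgetBalanced (w₁ w₂ ε : ℝ) (h₁ h₂ : ℝ → ℝ) : Prop :=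
  ∀ v₁ v₂ : ℝ,
    (w₁ * v₁ + w₂ * v₂ > 0 → |h₁ v₂ + h₂ v₁ - (w₂ / w₁) * v₂ - (w₁ / w₂) * v₁| < ε) ∧
    (w₁ * v₁ + w₂ * v₂ < 0 → |h₁ v₂ + h₂ v₁| < ε)

theorem IsNearBudgetBalanced.div_mul_lt {w₁ w₂ ε : ℝ} {h₁ h₂ : ℝ → ℝ} (hw₁ : 0 < w₁)
    (hw₂ : 0 < w₂) (H : IsNearBudgetBalanced w₁ w₂ ε h₁ h₂) {t : ℝ} (ht : 0 < t) :
    (w₂ / w₁) * t < 4 * ε := by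
  set x := 2 * w₂ * t / w₁
  have hx : w₁ * x = 2 * w₂ * t := mul_div_cancel₀ _ hw₁.ne'
  have hA := (H 0 t).1 (by nlinarith)
  have hB := (H 0 (-t)).2 (by nlinarith)
  have hC := (H x (-t)).1 (by nlinarith)
  have hD := (H x t).1 (by nlinarith)
  rw [abs_lt] at hA hB hC hD
  simp only [mul_zero, mul_neg] at hA hC
  linarith [hA.2, hB.1, hC.2, hD.1]

/-- in the two-agent unimprovability argument with unbounded
valuations, no functions `h₁, h₂` can make the budget imbalance uniformly
smaller than `ε`. -/
theorem stmt_17 (w₁ w₂ : ℝ) (hw₁ : 0 < w₁) (hw₂ : 0 < w₂) (ε : ℝ) (hε : 0 < ε) :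
    ¬ ∃ h₁ h₂ : ℝ → ℝ, ∀ v₁ v₂ : ℝ,
        (w₁ * v₁ + w₂ * v₂ > 0 →
          |h₁ v₂ + h₂ v₁ - (w₂ / w₁) * v₂ - (w₁ / w₂) * v₁| < ε) ∧
        (w₁ * v₁ + w₂ * v₂ < 0 → |h₁ v₂ + h₂ v₁| < ε) := by
  rintro ⟨h₁, h₂, H⟩
  have hlt := IsNearBudgetBalanced.div_mul_lt (t := 4 * ε * w₁ / w₂) hw₁ hw₂ H (by positivity)
  have heq : (w₂ / w₁) * (4 * ε * w₁ / w₂) = 4 * ε := by field_simp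
  linarith
end

section
/- For the two-agent two-alternative discretized problem with valuation levels {−1/2, 0, 1/2} per alternative, the optimal value of the LP minimizing worst-case absolute inefficiency subject to strategyproofness, budget balance, and valid-probability constraints is at least 1/7 (witnessed by a feasible dual solution with objective value 1/7, via weak LP duality). -/
/-- A two-agent two-alternative valuation profile whose entries all lie in the
three discrete levels `{-1/2, 0, 1/2}`. -/
def InLevels (v : Fin 2 → Bool → ℝ) : Prop :=
  ∀ i x, v i x = -(1/2) ∨ v i x = 0 ∨ v i x = 1/2

def mk (a b c d : ℝ) : Fin 2 → Bool → ℝ :=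
  fun i x => if i = 0 then (if x then a else b) else (if x then c else d)

lemma mk0t (a b c d : ℝ) : mk a b c d 0 true = a := rfl
lemma mk0f (a b c d : ℝ) : mk a b c d 0 false = b := rfl
lemma mk1t (a b c d : ℝ) : mk a b c d 1 true = c := rfl
lemma mk1f (a b c d : ℝ) : mk a b c d 1 false = d := rfl

lemma inLevels_mk {a b c d : ℝ}
    (ha : a = -(1/2) ∨ a = 0 ∨ a = 1/2) (hb : b = -(1/2) ∨ b = 0 ∨ b = 1/2)
    (hc : c = -(1/2) ∨ c = 0 ∨ c = 1/2) (hd : d = -(1/2) ∨ d = 0 ∨ d = 1/2) :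
    InLevels (mk a b c d) := by
  intro i x
  fin_cases i <;> cases x <;> simp only [mk0t, mk0f, mk1t, mk1f] <;> assumption

lemma eq_agent0 (a b a' b' c d : ℝ) :
    ∀ j : Fin 2, j ≠ 0 → mk a' b' c d j = mk a b c d j := by
  intro j hj; fin_cases j
  · exact absurd rfl hj
  · rfl

lemma eq_agent1 (a b c d c' d' : ℝ) :
    ∀ j : Fin 2, j ≠ 1 → mk a b c' d' j = mk a b c d j := by
  intro j hj; fin_cases j
  · rfl
  · exact absurd rfl hj


set_option maxHeartbeats 4000000
set_option maxRecDepth 4000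

/-- for the discretized two-agent two-alternative problem with
levels `{-1/2, 0, 1/2}`, any allocation/payment pair satisfying probability,
budget-balance, strategyproofness and max-inefficiency constraints has
inefficiency bound `ℓ ≥ 1/7`. -/

theorem stmt_18 (f : (Fin 2 → Bool → ℝ) → Bool → ℝ)
    (p : (Fin 2 → Bool → ℝ) → Fin 2 → ℝ) (ℓ : ℝ)
    (hprob : ∀ v, InLevels v → (∀ x, 0 ≤ f v x) ∧ f v true + f v false = 1)
    (hBB : ∀ v, InLevels v → p v 0 + p v 1 = 0)
    (hSP : ∀ (i : Fin 2) (v v' : Fin 2 → Bool → ℝ), InLevels v → InLevels v' →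
      (∀ j, j ≠ i → v' j = v j) →
      v i true * f v' true + v i false * f v' false - p v' i
        ≤ v i true * f v true + v i false * f v false - p v i)
    (hineff : ∀ v, InLevels v →
      max (v 0 true + v 1 true) (v 0 false + v 1 false)
        ≤ ℓ + (v 0 true + v 1 true) * f v true + (v 0 false + v 1 false) * f v false) :
    1/7 ≤ ℓ := by
  have hV0 : InLevels (mk (-(1/2)) (-(1/2)) (-(1/2)) (1/2)) := inLevels_mk (by norm_num) (by norm_num) (by norm_num) (by norm_num)
  have hV1 : InLevels (mk (0) (-(1/2)) (-(1/2)) (1/2)) := inLevels_mk (by norm_num) (by norm_num) (by norm_num) (by norm_num)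
  have hV2 : InLevels (mk (-(1/2)) (-(1/2)) (1/2) (-(1/2))) := inLevels_mk (by norm_num) (by norm_num) (by norm_num) (by norm_num)
  have hV3 : InLevels (mk (-(1/2)) (0) (1/2) (-(1/2))) := inLevels_mk (by norm_num) (by norm_num) (by norm_num) (by norm_num)
  have hV4 : InLevels (mk (-(1/2)) (0) (-(1/2)) (0)) := inLevels_mk (by norm_num) (by norm_num) (by norm_num) (by norm_num)
  have hV5 : InLevels (mk (-(1/2)) (0) (-(1/2)) (1/2)) := inLevels_mk (by norm_num) (by norm_num) (by norm_num) (by norm_num)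
  have hV6 : InLevels (mk (-(1/2)) (0) (0) (-(1/2))) := inLevels_mk (by norm_num) (by norm_num) (by norm_num) (by norm_num)
  have hV7 : InLevels (mk (-(1/2)) (1/2) (0) (-(1/2))) := inLevels_mk (by norm_num) (by norm_num) (by norm_num) (by norm_num)
  have hV8 : InLevels (mk (-(1/2)) (1/2) (-(1/2)) (-(1/2))) := inLevels_mk (by norm_num) (by norm_num) (by norm_num) (by norm_num)
  have hV9 : InLevels (mk (-(1/2)) (1/2) (-(1/2)) (0)) := inLevels_mk (by norm_num) (by norm_num) (by norm_num) (by norm_num)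
  have hV10 : InLevels (mk (-(1/2)) (1/2) (-(1/2)) (1/2)) := inLevels_mk (by norm_num) (by norm_num) (by norm_num) (by norm_num)
  have hV11 : InLevels (mk (0) (-(1/2)) (-(1/2)) (0)) := inLevels_mk (by norm_num) (by norm_num) (by norm_num) (by norm_num)
  have hV12 : InLevels (mk (1/2) (-(1/2)) (-(1/2)) (0)) := inLevels_mk (by norm_num) (by norm_num) (by norm_num) (by norm_num)
  have hV13 : InLevels (mk (0) (-(1/2)) (0) (-(1/2))) := inLevels_mk (by norm_num) (by norm_num) (by norm_num) (by norm_num)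
  have hV14 : InLevels (mk (0) (-(1/2)) (1/2) (-(1/2))) := inLevels_mk (by norm_num) (by norm_num) (by norm_num) (by norm_num)
  have hV15 : InLevels (mk (1/2) (-(1/2)) (-(1/2)) (-(1/2))) := inLevels_mk (by norm_num) (by norm_num) (by norm_num) (by norm_num)
  have hV16 : InLevels (mk (1/2) (-(1/2)) (0) (-(1/2))) := inLevels_mk (by norm_num) (by norm_num) (by norm_num) (by norm_num)
  have hV17 : InLevels (mk (1/2) (-(1/2)) (1/2) (-(1/2))) := inLevels_mk (by norm_num) (by norm_num) (by norm_num) (by norm_num)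
  obtain ⟨hpV0, hsV0⟩ := hprob (mk (-(1/2)) (-(1/2)) (-(1/2)) (1/2)) hV0
  have hptV0 := hpV0 true
  have hpfV0 := hpV0 false
  have hbbV0 := hBB (mk (-(1/2)) (-(1/2)) (-(1/2)) (1/2)) hV0
  obtain ⟨hpV1, hsV1⟩ := hprob (mk (0) (-(1/2)) (-(1/2)) (1/2)) hV1
  have hptV1 := hpV1 true
  have hpfV1 := hpV1 false
  have hbbV1 := hBB (mk (0) (-(1/2)) (-(1/2)) (1/2)) hV1
  obtain ⟨hpV2, hsV2⟩ := hprob (mk (-(1/2)) (-(1/2)) (1/2) (-(1/2))) hV2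
  have hptV2 := hpV2 true
  have hpfV2 := hpV2 false
  have hbbV2 := hBB (mk (-(1/2)) (-(1/2)) (1/2) (-(1/2))) hV2
  obtain ⟨hpV3, hsV3⟩ := hprob (mk (-(1/2)) (0) (1/2) (-(1/2))) hV3
  have hptV3 := hpV3 true
  have hpfV3 := hpV3 false
  have hbbV3 := hBB (mk (-(1/2)) (0) (1/2) (-(1/2))) hV3
  obtain ⟨hpV4, hsV4⟩ := hprob (mk (-(1/2)) (0) (-(1/2)) (0)) hV4
  have hptV4 := hpV4 true
  have hpfV4 := hpV4 false
  have hbbV4 := hBB (mk (-(1/2)) (0) (-(1/2)) (0)) hV4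
  obtain ⟨hpV5, hsV5⟩ := hprob (mk (-(1/2)) (0) (-(1/2)) (1/2)) hV5
  have hptV5 := hpV5 true
  have hpfV5 := hpV5 false
  have hbbV5 := hBB (mk (-(1/2)) (0) (-(1/2)) (1/2)) hV5
  obtain ⟨hpV6, hsV6⟩ := hprob (mk (-(1/2)) (0) (0) (-(1/2))) hV6
  have hptV6 := hpV6 true
  have hpfV6 := hpV6 false
  have hbbV6 := hBB (mk (-(1/2)) (0) (0) (-(1/2))) hV6
  obtain ⟨hpV7, hsV7⟩ := hprob (mk (-(1/2)) (1/2) (0) (-(1/2))) hV7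
  have hptV7 := hpV7 true
  have hpfV7 := hpV7 false
  have hbbV7 := hBB (mk (-(1/2)) (1/2) (0) (-(1/2))) hV7
  obtain ⟨hpV8, hsV8⟩ := hprob (mk (-(1/2)) (1/2) (-(1/2)) (-(1/2))) hV8
  have hptV8 := hpV8 true
  have hpfV8 := hpV8 false
  have hbbV8 := hBB (mk (-(1/2)) (1/2) (-(1/2)) (-(1/2))) hV8
  obtain ⟨hpV9, hsV9⟩ := hprob (mk (-(1/2)) (1/2) (-(1/2)) (0)) hV9
  have hptV9 := hpV9 true
  have hpfV9 := hpV9 false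
  have hbbV9 := hBB (mk (-(1/2)) (1/2) (-(1/2)) (0)) hV9
  obtain ⟨hpV10, hsV10⟩ := hprob (mk (-(1/2)) (1/2) (-(1/2)) (1/2)) hV10
  have hptV10 := hpV10 true
  have hpfV10 := hpV10 false
  have hbbV10 := hBB (mk (-(1/2)) (1/2) (-(1/2)) (1/2)) hV10
  obtain ⟨hpV11, hsV11⟩ := hprob (mk (0) (-(1/2)) (-(1/2)) (0)) hV11
  have hptV11 := hpV11 true
  have hpfV11 := hpV11 false
  have hbbV11 := hBB (mk (0) (-(1/2)) (-(1/2)) (0)) hV11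
  obtain ⟨hpV12, hsV12⟩ := hprob (mk (1/2) (-(1/2)) (-(1/2)) (0)) hV12
  have hptV12 := hpV12 true
  have hpfV12 := hpV12 false
  have hbbV12 := hBB (mk (1/2) (-(1/2)) (-(1/2)) (0)) hV12
  obtain ⟨hpV13, hsV13⟩ := hprob (mk (0) (-(1/2)) (0) (-(1/2))) hV13
  have hptV13 := hpV13 true
  have hpfV13 := hpV13 false
  have hbbV13 := hBB (mk (0) (-(1/2)) (0) (-(1/2))) hV13
  obtain ⟨hpV14, hsV14⟩ := hprob (mk (0) (-(1/2)) (1/2) (-(1/2))) hV14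
  have hptV14 := hpV14 true
  have hpfV14 := hpV14 false
  have hbbV14 := hBB (mk (0) (-(1/2)) (1/2) (-(1/2))) hV14
  obtain ⟨hpV15, hsV15⟩ := hprob (mk (1/2) (-(1/2)) (-(1/2)) (-(1/2))) hV15
  have hptV15 := hpV15 true
  have hpfV15 := hpV15 false
  have hbbV15 := hBB (mk (1/2) (-(1/2)) (-(1/2)) (-(1/2))) hV15
  obtain ⟨hpV16, hsV16⟩ := hprob (mk (1/2) (-(1/2)) (0) (-(1/2))) hV16
  have hptV16 := hpV16 true
  have hpfV16 := hpV16 false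
  have hbbV16 := hBB (mk (1/2) (-(1/2)) (0) (-(1/2))) hV16
  obtain ⟨hpV17, hsV17⟩ := hprob (mk (1/2) (-(1/2)) (1/2) (-(1/2))) hV17
  have hptV17 := hpV17 true
  have hpfV17 := hpV17 false
  have hbbV17 := hBB (mk (1/2) (-(1/2)) (1/2) (-(1/2))) hV17
  have hc0 := hSP 0 (mk (-(1/2)) (-(1/2)) (-(1/2)) (1/2)) (mk (0) (-(1/2)) (-(1/2)) (1/2)) hV0 hV1 (eq_agent0 (-(1/2)) (-(1/2)) (0) (-(1/2)) (-(1/2)) (1/2))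
  have hc1 := le_trans (le_max_right _ _) (hineff (mk (-(1/2)) (-(1/2)) (-(1/2)) (1/2)) hV0)
  have hc2 := hSP 0 (mk (-(1/2)) (-(1/2)) (1/2) (-(1/2))) (mk (-(1/2)) (0) (1/2) (-(1/2))) hV2 hV3 (eq_agent0 (-(1/2)) (-(1/2)) (-(1/2)) (0) (1/2) (-(1/2)))
  have hc3 := le_trans (le_max_left _ _) (hineff (mk (-(1/2)) (-(1/2)) (1/2) (-(1/2))) hV2)
  have hc4 := le_trans (le_max_right _ _) (hineff (mk (-(1/2)) (0) (-(1/2)) (0)) hV4)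
  have hc5 := hSP 0 (mk (-(1/2)) (0) (-(1/2)) (1/2)) (mk (-(1/2)) (-(1/2)) (-(1/2)) (1/2)) hV5 hV0 (eq_agent0 (-(1/2)) (0) (-(1/2)) (-(1/2)) (-(1/2)) (1/2))
  have hc6 := hSP 1 (mk (-(1/2)) (0) (-(1/2)) (1/2)) (mk (-(1/2)) (0) (-(1/2)) (0)) hV5 hV4 (eq_agent1 (-(1/2)) (0) (-(1/2)) (1/2) (-(1/2)) (0))
  have hc7 := hSP 0 (mk (-(1/2)) (0) (0) (-(1/2))) (mk (-(1/2)) (1/2) (0) (-(1/2))) hV6 hV7 (eq_agent0 (-(1/2)) (0) (-(1/2)) (1/2) (0) (-(1/2)))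
  have hc8 := hSP 1 (mk (-(1/2)) (0) (0) (-(1/2))) (mk (-(1/2)) (0) (1/2) (-(1/2))) hV6 hV3 (eq_agent1 (-(1/2)) (0) (0) (-(1/2)) (1/2) (-(1/2)))
  have hc9 := le_trans (le_max_left _ _) (hineff (mk (-(1/2)) (0) (1/2) (-(1/2))) hV3)
  have hc10 := hSP 1 (mk (-(1/2)) (1/2) (-(1/2)) (-(1/2))) (mk (-(1/2)) (1/2) (0) (-(1/2))) hV8 hV7 (eq_agent1 (-(1/2)) (1/2) (-(1/2)) (-(1/2)) (0) (-(1/2)))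
  have hc11 := le_trans (le_max_right _ _) (hineff (mk (-(1/2)) (1/2) (-(1/2)) (-(1/2))) hV8)
  have hc12 := hSP 0 (mk (-(1/2)) (1/2) (-(1/2)) (0)) (mk (-(1/2)) (0) (-(1/2)) (0)) hV9 hV4 (eq_agent0 (-(1/2)) (1/2) (-(1/2)) (0) (-(1/2)) (0))
  have hc13 := hSP 1 (mk (-(1/2)) (1/2) (-(1/2)) (0)) (mk (-(1/2)) (1/2) (-(1/2)) (-(1/2))) hV9 hV8 (eq_agent1 (-(1/2)) (1/2) (-(1/2)) (0) (-(1/2)) (-(1/2)))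
  have hc14 := hSP 0 (mk (-(1/2)) (1/2) (-(1/2)) (1/2)) (mk (-(1/2)) (0) (-(1/2)) (1/2)) hV10 hV5 (eq_agent0 (-(1/2)) (1/2) (-(1/2)) (0) (-(1/2)) (1/2))
  have hc15 := hSP 1 (mk (-(1/2)) (1/2) (-(1/2)) (1/2)) (mk (-(1/2)) (1/2) (-(1/2)) (0)) hV10 hV9 (eq_agent1 (-(1/2)) (1/2) (-(1/2)) (1/2) (-(1/2)) (0))
  have hc17 := le_trans (le_max_right _ _) (hineff (mk (-(1/2)) (1/2) (0) (-(1/2))) hV7)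
  have hc18 := hSP 0 (mk (0) (-(1/2)) (-(1/2)) (0)) (mk (1/2) (-(1/2)) (-(1/2)) (0)) hV11 hV12 (eq_agent0 (0) (-(1/2)) (1/2) (-(1/2)) (-(1/2)) (0))
  have hc19 := hSP 1 (mk (0) (-(1/2)) (-(1/2)) (0)) (mk (0) (-(1/2)) (-(1/2)) (1/2)) hV11 hV1 (eq_agent1 (0) (-(1/2)) (-(1/2)) (0) (-(1/2)) (1/2))
  have hc20 := le_trans (le_max_right _ _) (hineff (mk (0) (-(1/2)) (-(1/2)) (1/2)) hV1)
  have hc21 := le_trans (le_max_left _ _) (hineff (mk (0) (-(1/2)) (0) (-(1/2))) hV13)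
  have hc22 := hSP 0 (mk (0) (-(1/2)) (1/2) (-(1/2))) (mk (-(1/2)) (-(1/2)) (1/2) (-(1/2))) hV14 hV2 (eq_agent0 (0) (-(1/2)) (-(1/2)) (-(1/2)) (1/2) (-(1/2)))
  have hc23 := hSP 1 (mk (0) (-(1/2)) (1/2) (-(1/2))) (mk (0) (-(1/2)) (0) (-(1/2))) hV14 hV13 (eq_agent1 (0) (-(1/2)) (1/2) (-(1/2)) (0) (-(1/2)))
  have hc24 := hSP 1 (mk (1/2) (-(1/2)) (-(1/2)) (-(1/2))) (mk (1/2) (-(1/2)) (-(1/2)) (0)) hV15 hV12 (eq_agent1 (1/2) (-(1/2)) (-(1/2)) (-(1/2)) (-(1/2)) (0))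
  have hc25 := le_trans (le_max_left _ _) (hineff (mk (1/2) (-(1/2)) (-(1/2)) (-(1/2))) hV15)
  have hc26 := le_trans (le_max_left _ _) (hineff (mk (1/2) (-(1/2)) (-(1/2)) (0)) hV12)
  have hc27 := hSP 0 (mk (1/2) (-(1/2)) (0) (-(1/2))) (mk (0) (-(1/2)) (0) (-(1/2))) hV16 hV13 (eq_agent0 (1/2) (-(1/2)) (0) (-(1/2)) (0) (-(1/2)))
  have hc28 := hSP 1 (mk (1/2) (-(1/2)) (0) (-(1/2))) (mk (1/2) (-(1/2)) (-(1/2)) (-(1/2))) hV16 hV15 (eq_agent1 (1/2) (-(1/2)) (0) (-(1/2)) (-(1/2)) (-(1/2)))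
  have hc29 := hSP 0 (mk (1/2) (-(1/2)) (1/2) (-(1/2))) (mk (0) (-(1/2)) (1/2) (-(1/2))) hV17 hV14 (eq_agent0 (1/2) (-(1/2)) (0) (-(1/2)) (1/2) (-(1/2)))
  have hc30 := hSP 1 (mk (1/2) (-(1/2)) (1/2) (-(1/2))) (mk (1/2) (-(1/2)) (0) (-(1/2))) hV17 hV16 (eq_agent1 (1/2) (-(1/2)) (1/2) (-(1/2)) (0) (-(1/2)))
  simp only [mk0t, mk0f, mk1t, mk1f] at hc0 hc1 hc2 hc3 hc4 hc5 hc6 hc7 hc8 hc9 hc10 hc11 hc12 hc13 hc14 hc15 hc17 hc18 hc19 hc20 hc21 hc22 hc23 hc24 hc25 hc26 hc27 hc28 hc29 hc30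
  linarith [hsV0, hptV0, hpfV0, hbbV0, hsV1, hptV1, hpfV1, hbbV1, hsV2, hptV2, hpfV2, hbbV2, hsV3, hptV3, hpfV3, hbbV3, hsV4, hptV4, hpfV4, hbbV4, hsV5, hptV5, hpfV5, hbbV5, hsV6, hptV6, hpfV6, hbbV6, hsV7, hptV7, hpfV7, hbbV7, hsV8, hptV8, hpfV8, hbbV8, hsV9, hptV9, hpfV9, hbbV9, hsV10, hptV10, hpfV10, hbbV10, hsV11, hptV11, hpfV11, hbbV11, hsV12, hptV12, hpfV12, hbbV12, hsV13, hptV13, hpfV13, hbbV13, hsV14, hptV14, hpfV14, hbbV14, hsV15, hptV15, hpfV15, hbbV15, hsV16, hptV16, hpfV16, hbbV16, hsV17, hptV17, hpfV17, hbbV17, hc0, hc1, hc2, hc3, hc4, hc5, hc6, hc7, hc8, hc9, hc10, hc11, hc12, hc13, hc14, hc15, hc17, hc18, hc19, hc20, hc21, hc22, hc23, hc24, hc25, hc26, hc27, hc28, hc29, hc30]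
end
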